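/- arXiv:1709.00336 — 3 statements merged into one kernel-verified Lean document; each statement's English description precedes it below -/
import Mathlib

section
/- For Beltrami coefficients \(\mu_1, \mu_2, \nu\) on the unit disk (measurable functions with \(L^\infty\) norm less than 1), if \(f^\nu\) is the normalized quasiconformal self-map of the disk with complex dilatation \(\nu\), then the complex dilatations of the compositions satisfy \(|\mu_1 * \nu^{-1}(\zeta) - \mu_2 * \nu^{-1}(\zeta)| \le |\mu_1(z) - \mu_2(z)| / \sqrt{(1-|\mu_1(z)|^2)(1-|\mu_2(z)|^2)}\) for \(\zeta = f^\nu(z)\), \(z \in \mathbb{D}\). -/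
open Complex Metric ComplexConjugate

/- The disk automorphism `a ↦ (a - c) / (1 - c̄ a)` shrinks differences by the factor
`(1 - |c|²) / (|1 - c̄ a| |1 - c̄ b|)`, and the identity
`|1 - c̄ a|² = (1 - |a|²)(1 - |c|²) + |a - c|²` bounds each denominator below by
`√((1 - |a|²)(1 - |c|²))`; the factors `1 - |c|²` then cancel. -/

theorem norm_one_sub_conj_mul_sq (a c : ℂ) :
    ‖1 - conj c * a‖ ^ 2 = (1 - ‖a‖ ^ 2) * (1 - ‖c‖ ^ 2) + ‖a - c‖ ^ 2 := by
  simp only [Complex.sq_norm, Complex.normSq_apply, Complex.sub_re, Complex.sub_im,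
    Complex.mul_re, Complex.mul_im, Complex.one_re, Complex.one_im, Complex.conj_re,
    Complex.conj_im]
  ring

theorem one_sub_conj_mul_ne_zero {a c : ℂ} (ha : ‖a‖ < 1) (hc : ‖c‖ < 1) :
    1 - conj c * a ≠ 0 := by
  intro h
  have hpos : 0 < (1 - ‖a‖ ^ 2) * (1 - ‖c‖ ^ 2) := by
    apply mul_pos <;> nlinarith [norm_nonneg a, norm_nonneg c]
  have := norm_one_sub_conj_mul_sq a c
  rw [h, norm_zero] at this
  nlinarith [sq_nonneg ‖a - c‖]

theorem moebius_sub_moebius {a b c : ℂ} (ha : 1 - conj c * a ≠ 0) (hb : 1 - conj c * b ≠ 0) :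
    (a - c) / (1 - conj c * a) - (b - c) / (1 - conj c * b)
      = (a - b) * (1 - (‖c‖ ^ 2 : ℝ)) / ((1 - conj c * a) * (1 - conj c * b)) := by
  rw [div_sub_div _ _ ha hb, ← Complex.normSq_eq_norm_sq, Complex.normSq_eq_conj_mul_self]
  ring

theorem norm_moebius_sub_moebius_le {a b c : ℂ} (ha : ‖a‖ < 1) (hb : ‖b‖ < 1) (hc : ‖c‖ < 1) :
    ‖(a - c) / (1 - conj c * a) - (b - c) / (1 - conj c * b)‖
      ≤ ‖a - b‖ / Real.sqrt ((1 - ‖a‖ ^ 2) * (1 - ‖b‖ ^ 2)) := by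
  have hA : 0 < ‖1 - conj c * a‖ := norm_pos_iff.mpr (one_sub_conj_mul_ne_zero ha hc)
  have hB : 0 < ‖1 - conj c * b‖ := norm_pos_iff.mpr (one_sub_conj_mul_ne_zero hb hc)
  have ha' : 0 < 1 - ‖a‖ ^ 2 := by nlinarith [norm_nonneg a]
  have hb' : 0 < 1 - ‖b‖ ^ 2 := by nlinarith [norm_nonneg b]
  have hc' : 0 < 1 - ‖c‖ ^ 2 := by nlinarith [norm_nonneg c]
  have hfactor : ‖(1 - ((‖c‖ ^ 2 : ℝ) : ℂ))‖ = 1 - ‖c‖ ^ 2 := by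
    rw [← Complex.ofReal_one, ← Complex.ofReal_sub, Complex.norm_real, Real.norm_of_nonneg hc'.le]
  have hdenom : (1 - ‖c‖ ^ 2) * Real.sqrt ((1 - ‖a‖ ^ 2) * (1 - ‖b‖ ^ 2))
      ≤ ‖1 - conj c * a‖ * ‖1 - conj c * b‖ := by
    rw [mul_comm, ← Real.sqrt_sq hc'.le, ← Real.sqrt_mul (by positivity), Real.sqrt_le_left]
    · calc (1 - ‖a‖ ^ 2) * (1 - ‖b‖ ^ 2) * (1 - ‖c‖ ^ 2) ^ 2
          = ((1 - ‖a‖ ^ 2) * (1 - ‖c‖ ^ 2)) * ((1 - ‖b‖ ^ 2) * (1 - ‖c‖ ^ 2)) := by ring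
        _ ≤ ‖1 - conj c * a‖ ^ 2 * ‖1 - conj c * b‖ ^ 2 := by
          gcongr
          · rw [norm_one_sub_conj_mul_sq]; nlinarith [sq_nonneg ‖a - c‖]
          · rw [norm_one_sub_conj_mul_sq]; nlinarith [sq_nonneg ‖b - c‖]
        _ = (‖1 - conj c * a‖ * ‖1 - conj c * b‖) ^ 2 := by ring
    · positivity
  rw [moebius_sub_moebius (one_sub_conj_mul_ne_zero ha hc) (one_sub_conj_mul_ne_zero hb hc),
    norm_div, norm_mul, norm_mul, hfactor, div_le_div_iff₀ (by positivity) (by positivity), mul_assoc]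
  exact mul_le_mul_of_nonneg_left hdenom (norm_nonneg _)

theorem stmt_0_general (μ₁ μ₂ ν : ℂ → ℂ)
    (hμ₁ : ∀ z ∈ ball (0 : ℂ) 1, ‖μ₁ z‖ < 1)
    (hμ₂ : ∀ z ∈ ball (0 : ℂ) 1, ‖μ₂ z‖ < 1)
    (hν : ∀ z ∈ ball (0 : ℂ) 1, ‖ν z‖ < 1)
    (f : ℂ → ℂ)
    (u : ℂ → ℂ) (hu : ∀ z ∈ ball (0 : ℂ) 1, ‖u z‖ = 1)
    (d₁ d₂ : ℂ → ℂ)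
    (hd₁ : ∀ z ∈ ball (0 : ℂ) 1,
      d₁ (f z) = (μ₁ z - ν z) / (1 - (starRingEnd ℂ) (ν z) * μ₁ z) * u z)
    (hd₂ : ∀ z ∈ ball (0 : ℂ) 1,
      d₂ (f z) = (μ₂ z - ν z) / (1 - (starRingEnd ℂ) (ν z) * μ₂ z) * u z) :
    ∀ z ∈ ball (0 : ℂ) 1,
      ‖d₁ (f z) - d₂ (f z)‖
        ≤ ‖μ₁ z - μ₂ z‖ / Real.sqrt ((1 - ‖μ₁ z‖ ^ 2) * (1 - ‖μ₂ z‖ ^ 2)) := by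
  intro z hz
  rw [hd₁ z hz, hd₂ z hz, ← sub_mul, norm_mul, hu z hz, mul_one]
  exact norm_moebius_sub_moebius_le (hμ₁ z hz) (hμ₂ z hz) (hν z hz)

/-- Proposition `base2` of the paper: let `μ₁, μ₂, ν` be Beltrami coefficients on the unit
disk (pointwise modulus `< 1`), let `f` be the normalized quasiconformal self-map `f^ν`
of the disk (a bijection of the disk fixing the three boundary points `1, i, -1` of its
boundary extension), and let `u = ∂f/ conj(∂f)` be the unimodular derivative ratio.
If `d₁, d₂` are the complex dilatations of `f^{μ₁} ∘ (f^ν)⁻¹` and `f^{μ₂} ∘ (f^ν)⁻¹`,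
given at `ζ = f(z)` by the composition formula
`dᵢ(f z) = ((μᵢ z - ν z)/(1 - conj(ν z) μᵢ z)) ⬝ u z`, then
`|d₁(ζ) - d₂(ζ)| ≤ |μ₁(z) - μ₂(z)| / √((1-|μ₁ z|²)(1-|μ₂ z|²))` for `ζ = f(z)`, `z ∈ 𝔻`. -/
theorem stmt_0 (μ₁ μ₂ ν : ℂ → ℂ)
    (hμ₁ : ∀ z ∈ ball (0 : ℂ) 1, ‖μ₁ z‖ < 1)
    (hμ₂ : ∀ z ∈ ball (0 : ℂ) 1, ‖μ₂ z‖ < 1)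
    (hν : ∀ z ∈ ball (0 : ℂ) 1, ‖ν z‖ < 1)
    (f : ℂ → ℂ) (hf : Set.BijOn f (ball (0 : ℂ) 1) (ball (0 : ℂ) 1))
    (u : ℂ → ℂ) (hu : ∀ z ∈ ball (0 : ℂ) 1, ‖u z‖ = 1)
    (d₁ d₂ : ℂ → ℂ)
    (hd₁ : ∀ z ∈ ball (0 : ℂ) 1,
      d₁ (f z) = (μ₁ z - ν z) / (1 - (starRingEnd ℂ) (ν z) * μ₁ z) * u z)
    (hd₂ : ∀ z ∈ ball (0 : ℂ) 1,
      d₂ (f z) = (μ₂ z - ν z) / (1 - (starRingEnd ℂ) (ν z) * μ₂ z) * u z) :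
    ∀ z ∈ ball (0 : ℂ) 1,
      ‖d₁ (f z) - d₂ (f z)‖
        ≤ ‖μ₁ z - μ₂ z‖ / Real.sqrt ((1 - ‖μ₁ z‖ ^ 2) * (1 - ‖μ₂ z‖ ^ 2)) :=
  stmt_0_general μ₁ μ₂ ν hμ₁ hμ₂ hν f u hu d₁ d₂ hd₁ hd₂
end

section
/- Let \(g\) be a real-valued orientation-preserving \(C^{1+\alpha}\)-diffeomorphism (derivative is \(\alpha\)-Hölder continuous, \(0 < \alpha < 1\)) defined on a neighborhood of \(0 \in \mathbb{R}\) with \(g(0) = 0\) and \(g'(0) = a \neq 1\), \(a > 0\). Then there exists a real-valued orientation-preserving \(C^{1+\alpha}\)-diffeomorphism \(h\) defined on some neighborhood of \(0\) with \(h(0) = 0\), \(h'(0) = 1\), such that \(h(g(x)) = a\,h(x)\) on that neighborhood. -/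
/-!
For `|a| < 1` the map `g` contracts a small ball `B` around `0` by a factor `b < 1`, and
`h = lim g^[n] / a ^ n` conjugates `g` to `x ↦ a * x`, because
`g^[n] (g x) / a ^ n = a * (g^[n + 1] x / a ^ (n + 1))`. The derivative of `g^[n] / a ^ n` is the
product of the factors `g' (g^[k] x) / a`; by Hölder continuity of `g'` these factors differ from
`1`, and from each other at two points `x, y`, by `O(t ^ k)` and `O(t ^ k |x - y| ^ α)` with
`t = b ^ α < 1`. Hence the products converge uniformly on `B` to an `α`-Hölder limit `h'`, which
is then the derivative of `h`, and `h' 0 = 1`. For `|a| > 1` one linearizes the local inverse of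
`g`, which is again `C^{1+α}` with derivative `a⁻¹` at `0`.
-/

open Set Filter Topology Finset Metric

/-- `f` is `C^{1+α}` on `s`, with derivative `f'`. -/
def HasHolderDerivOn (α : ℝ) (f f' : ℝ → ℝ) (s : Set ℝ) : Prop :=
  (∀ x ∈ s, HasDerivAt f (f' x) x) ∧
    ∃ c, 0 ≤ c ∧ ∀ x ∈ s, ∀ y ∈ s, |f' x - f' y| ≤ c * |x - y| ^ α

namespace HasHolderDerivOn

variable {α : ℝ} {f f' : ℝ → ℝ} {s t : Set ℝ}

theorem mono (hf : HasHolderDerivOn α f f' s) (hts : t ⊆ s) : HasHolderDerivOn α f f' t := by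
  obtain ⟨hd, c, hc, hhold⟩ := hf
  exact ⟨fun x hx => hd x (hts hx), c, hc, fun x hx y hy => hhold x (hts hx) y (hts hy)⟩

theorem continuousAt_deriv (hf : HasHolderDerivOn α f f' s) (hα : 0 < α) {x : ℝ}
    (hs : s ∈ 𝓝 x) : ContinuousAt f' x := by
  obtain ⟨-, c, -, hhold⟩ := hf
  have hbound : Tendsto (fun y => c * |y - x| ^ α) (𝓝 x) (𝓝 0) := by
    have : ContinuousAt (fun y => c * |y - x| ^ α) x := by
      fun_prop (disch := exact Or.inr hα.le)
    simpa [Real.zero_rpow hα.ne'] using this.tendsto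
  rw [ContinuousAt, tendsto_iff_norm_sub_tendsto_zero]
  refine squeeze_zero' (Eventually.of_forall fun y => norm_nonneg _) ?_ hbound
  filter_upwards [hs] with y hy using hhold y hy x (mem_of_mem_nhds hs)

end HasHolderDerivOn

section Products

variable {ι : Type*} {u v ε : ι → ℝ}

theorem abs_le_exp_of_abs_sub_one_le {x e : ℝ} (h : |x - 1| ≤ e) : |x| ≤ Real.exp e := by
  have := abs_sub_abs_le_abs_sub x 1
  rw [abs_one] at this
  linarith [Real.add_one_le_exp e]

theorem abs_prod_le_exp_sum (S : Finset ι) (hu : ∀ i ∈ S, |u i - 1| ≤ ε i) :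
    |∏ i ∈ S, u i| ≤ Real.exp (∑ i ∈ S, ε i) := by
  rw [abs_prod, Real.exp_sum]
  exact prod_le_prod (fun i _ => abs_nonneg _) fun i hi => abs_le_exp_of_abs_sub_one_le (hu i hi)

theorem abs_prod_sub_prod_le (S : Finset ι) (hu : ∀ i ∈ S, |u i - 1| ≤ ε i)
    (hv : ∀ i ∈ S, |v i - 1| ≤ ε i) :
    |∏ i ∈ S, u i - ∏ i ∈ S, v i| ≤ Real.exp (∑ i ∈ S, ε i) * ∑ i ∈ S, |u i - v i| := by
  classical
  induction S using Finset.induction_on with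
  | empty => simp
  | insert j S hj ih =>
    rw [Finset.forall_mem_insert] at hu hv
    rw [prod_insert hj, prod_insert hj, sum_insert hj, sum_insert hj, Real.exp_add]
    have hεj : 1 ≤ Real.exp (ε j) := Real.one_le_exp ((abs_nonneg _).trans hu.1)
    have hv_prod := abs_prod_le_exp_sum S hv.2
    calc |u j * ∏ i ∈ S, u i - v j * ∏ i ∈ S, v i|
        = |u j * (∏ i ∈ S, u i - ∏ i ∈ S, v i) + (u j - v j) * ∏ i ∈ S, v i| := by ring_nf
      _ ≤ |u j| * |∏ i ∈ S, u i - ∏ i ∈ S, v i| + |u j - v j| * |∏ i ∈ S, v i| := by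
        rw [← abs_mul, ← abs_mul]; exact abs_add_le _ _
      _ ≤ Real.exp (ε j) * (Real.exp (∑ i ∈ S, ε i) * ∑ i ∈ S, |u i - v i|)
          + |u j - v j| * (Real.exp (ε j) * Real.exp (∑ i ∈ S, ε i)) := by
        gcongr
        · exact abs_le_exp_of_abs_sub_one_le hu.1
        · exact ih hu.2 hv.2
        · exact hv_prod.trans (le_mul_of_one_le_left (Real.exp_nonneg _) hεj)
      _ = _ := by ring

end Products

section GeometricProducts

variable {t K d : ℝ} {v w : ℕ → ℝ}

theorem sum_range_pow_le_inv_one_sub (ht0 : 0 ≤ t) (ht1 : t < 1) (n : ℕ) :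
    ∑ k ∈ range n, t ^ k ≤ (1 - t)⁻¹ := by
  have := geom_sum_Ico_le_of_lt_one (m := 0) (n := n) ht0 ht1
  rwa [← range_eq_Ico, pow_zero, one_div] at this

theorem sum_range_mul_pow_le (ht0 : 0 ≤ t) (ht1 : t < 1) (hK : 0 ≤ K) (n : ℕ) :
    ∑ k ∈ range n, K * t ^ k ≤ K * (1 - t)⁻¹ := by
  rw [← mul_sum]
  exact mul_le_mul_of_nonneg_left (sum_range_pow_le_inv_one_sub ht0 ht1 n) hK

theorem abs_prod_range_le_exp (ht0 : 0 ≤ t) (ht1 : t < 1) (hK : 0 ≤ K)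
    (hv : ∀ k, |v k - 1| ≤ K * t ^ k) (n : ℕ) :
    |∏ k ∈ range n, v k| ≤ Real.exp (K * (1 - t)⁻¹) :=
  (abs_prod_le_exp_sum _ fun k _ => hv k).trans
    (Real.exp_le_exp.2 (sum_range_mul_pow_le ht0 ht1 hK n))

theorem abs_prod_range_sub_prod_range_le (ht0 : 0 ≤ t) (ht1 : t < 1) (hK : 0 ≤ K)
    (hv : ∀ k, |v k - 1| ≤ K * t ^ k) (hw : ∀ k, |w k - 1| ≤ K * t ^ k)
    (hvw : ∀ k, |v k - w k| ≤ t ^ k * d) (n : ℕ) :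
    |∏ k ∈ range n, v k - ∏ k ∈ range n, w k| ≤ Real.exp (K * (1 - t)⁻¹) * (1 - t)⁻¹ * d := by
  have hd : 0 ≤ d := by simpa using (abs_nonneg _).trans (hvw 0)
  calc |∏ k ∈ range n, v k - ∏ k ∈ range n, w k|
      ≤ Real.exp (∑ k ∈ range n, K * t ^ k) * ∑ k ∈ range n, t ^ k * d :=
        (abs_prod_sub_prod_le _ (fun k _ => hv k) (fun k _ => hw k)).trans
          (by gcongr with k; exact hvw k)
    _ ≤ Real.exp (K * (1 - t)⁻¹) * ((1 - t)⁻¹ * d) := by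
        rw [← sum_mul]
        gcongr
        exacts [sum_range_mul_pow_le ht0 ht1 hK n, sum_range_pow_le_inv_one_sub ht0 ht1 n]
    _ = _ := by ring

variable {X : Type*} {u : ℕ → X → ℝ} {s : Set X}

theorem exists_tendstoUniformlyOn_prod_range (ht0 : 0 ≤ t) (ht1 : t < 1) (hK : 0 ≤ K)
    (hu : ∀ k, ∀ x ∈ s, |u k x - 1| ≤ K * t ^ k) :
    ∃ P : X → ℝ, TendstoUniformlyOn (fun n x => ∏ k ∈ range n, u k x) P atTop s := by
  set M := Real.exp (K * (1 - t)⁻¹)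
  have hstep : ∀ n, ∀ x ∈ s,
      ‖∏ k ∈ range (n + 1), u k x - ∏ k ∈ range n, u k x‖ ≤ M * K * t ^ n := fun n x hx => by
    rw [prod_range_succ, Real.norm_eq_abs, ← mul_sub_one, abs_mul, mul_assoc]
    gcongr
    exacts [abs_prod_range_le_exp ht0 ht1 hK (fun k => hu k x hx) n, hu n x hx]
  have hsum : Summable fun n => M * K * t ^ n := (summable_geometric_of_lt_one ht0 ht1).mul_left _
  -- the partial products telescope into a series to which the Weierstrass M-test applies
  have htele : ∀ n x, ∏ k ∈ range n, u k x =
      1 + ∑ k ∈ range n, (∏ i ∈ range (k + 1), u i x - ∏ i ∈ range k, u i x) := by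
    intro n x; rw [sum_range_sub (fun k => ∏ i ∈ range k, u i x)]; simp
  refine ⟨fun x => 1 + ∑' n, (∏ i ∈ range (n + 1), u i x - ∏ i ∈ range n, u i x),
    Metric.tendstoUniformlyOn_iff.2 fun r hr => ?_⟩
  filter_upwards [Metric.tendstoUniformlyOn_iff.1 (tendstoUniformlyOn_tsum_nat hsum hstep) r hr]
    with n hn x hx
  rw [htele n x, dist_add_left]
  exact hn x hx

theorem exists_tendstoUniformlyOn_prod_range_of_abs_sub_le {x₀ : X} {D : X → X → ℝ}
    (ht0 : 0 ≤ t) (ht1 : t < 1) (hx₀ : x₀ ∈ s) (hu₀ : ∀ k, u k x₀ = 1)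
    (hu : ∀ k, ∀ x ∈ s, ∀ y ∈ s, |u k x - u k y| ≤ t ^ k * D x y) (hK : ∀ x ∈ s, D x x₀ ≤ K) :
    ∃ P : X → ℝ, TendstoUniformlyOn (fun n x => ∏ k ∈ range n, u k x) P atTop s ∧
      ∃ C, 0 ≤ C ∧ ∀ x ∈ s, ∀ y ∈ s, |P x - P y| ≤ C * D x y := by
  have hu_one : ∀ k, ∀ x ∈ s, |u k x - 1| ≤ K * t ^ k := fun k x hx => by
    have := (hu k x hx x₀ hx₀).trans (mul_le_mul_of_nonneg_left (hK x hx) (pow_nonneg ht0 k))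
    rwa [hu₀, mul_comm] at this
  have hK0 : 0 ≤ K := by simpa [hu₀] using hu_one 0 x₀ hx₀
  obtain ⟨P, hP⟩ := exists_tendstoUniformlyOn_prod_range ht0 ht1 hK0 hu_one
  refine ⟨P, hP, Real.exp (K * (1 - t)⁻¹) * (1 - t)⁻¹, by positivity, fun x hx y hy => ?_⟩
  exact le_of_tendsto' ((hP.tendsto_at hx).sub (hP.tendsto_at hy)).abs fun n =>
    abs_prod_range_sub_prod_range_le ht0 ht1 hK0 (fun k => hu_one k x hx)
      (fun k => hu_one k y hy) (fun k => hu k x hx y hy) n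

end GeometricProducts

theorem dist_iterate_le_of_mapsTo {X : Type*} [PseudoMetricSpace X] {f : X → X} {s : Set X}
    {b : ℝ} (hb : 0 ≤ b) (hs : MapsTo f s s)
    (hf : ∀ x ∈ s, ∀ y ∈ s, dist (f x) (f y) ≤ b * dist x y) (n : ℕ) {x y : X} (hx : x ∈ s)
    (hy : y ∈ s) : dist (f^[n] x) (f^[n] y) ≤ b ^ n * dist x y := by
  induction n with
  | zero => simp
  | succ n ih =>
    rw [Function.iterate_succ_apply', Function.iterate_succ_apply', pow_succ', mul_assoc]
    exact (hf _ (hs.iterate n hx) _ (hs.iterate n hy)).trans (by gcongr)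

theorem abs_comp_iterate_sub_le {f φ : ℝ → ℝ} {s : Set ℝ} {b c α : ℝ} (hα : 0 ≤ α) (hb : 0 ≤ b)
    (hc : 0 ≤ c) (hs : MapsTo f s s) (hf : ∀ x ∈ s, ∀ y ∈ s, dist (f x) (f y) ≤ b * dist x y)
    (hφ : ∀ x ∈ s, ∀ y ∈ s, |φ x - φ y| ≤ c * |x - y| ^ α) (k : ℕ) {x y : ℝ} (hx : x ∈ s)
    (hy : y ∈ s) : |φ (f^[k] x) - φ (f^[k] y)| ≤ (b ^ α) ^ k * (c * |x - y| ^ α) :=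
  calc |φ (f^[k] x) - φ (f^[k] y)|
      ≤ c * |f^[k] x - f^[k] y| ^ α := hφ _ (hs.iterate k hx) _ (hs.iterate k hy)
    _ ≤ c * (b ^ k * |x - y|) ^ α := by
        gcongr; exact dist_iterate_le_of_mapsTo hb hs hf k hx hy
    _ = (b ^ α) ^ k * (c * |x - y| ^ α) := by
        rw [Real.mul_rpow (by positivity) (abs_nonneg _), Real.rpow_pow_comm hb]; ring

theorem mapsTo_ball_of_dist_le {X : Type*} [PseudoMetricSpace X] {f : X → X} {x₀ : X} {b δ : ℝ}
    (hb : b ≤ 1) (hf : ∀ x ∈ ball x₀ δ, dist (f x) x₀ ≤ b * dist x x₀) :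
    MapsTo f (ball x₀ δ) (ball x₀ δ) := fun x hx => by
  have := hf x hx
  rw [mem_ball] at hx ⊢
  nlinarith [dist_nonneg (x := x) (y := x₀)]

theorem hasDerivAt_iterate_of_mapsTo {𝕜 : Type*} [NontriviallyNormedField 𝕜] {f f' : 𝕜 → 𝕜}
    {s : Set 𝕜} (hs : MapsTo f s s) (hf : ∀ x ∈ s, HasDerivAt f (f' x) x) (n : ℕ) {x : 𝕜}
    (hx : x ∈ s) : HasDerivAt f^[n] (∏ k ∈ range n, f' (f^[k] x)) x := by
  induction n with
  | zero => simpa using hasDerivAt_id x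
  | succ n ih =>
    rw [prod_range_succ, mul_comm, Function.iterate_succ']
    exact (hf _ (hs.iterate n hx)).comp x ih

theorem exists_hasDerivAt_of_tendstoUniformlyOn_ball {𝕜 G : Type*} [NontriviallyNormedField 𝕜]
    [IsRCLikeNormedField 𝕜] [NormedAddCommGroup G] [NormedSpace 𝕜 G] [CompleteSpace G]
    {f f' : ℕ → 𝕜 → G} {g' : 𝕜 → G} {x : 𝕜} {r : ℝ}
    (hf' : TendstoUniformlyOn f' g' atTop (ball x r))
    (hf : ∀ n, ∀ y ∈ ball x r, HasDerivAt (f n) (f' n y) y) (hfx : CauchySeq fun n => f n x) :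
    ∃ g : 𝕜 → G, (∀ y ∈ ball x r, Tendsto (fun n => f n y) atTop (𝓝 (g y))) ∧
      ∀ y ∈ ball x r, HasDerivAt g (g' y) y := by
  have hf_cauchy := uniformCauchySeqOn_ball_of_deriv hf'.uniformCauchySeqOn hf hfx
  have hlim : ∀ y ∈ ball x r,
      Tendsto (fun n => f n y) atTop (𝓝 (limUnder atTop fun n => f n y)) :=
    fun y hy => (hf_cauchy.cauchySeq hy).tendsto_limUnder
  exact ⟨_, hlim, fun y hy =>
    hasDerivAt_of_tendstoUniformlyOn isOpen_ball hf' (Eventually.of_forall hf) hlim hy⟩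

theorem exists_mem_nhds_strictMonoOn_of_deriv_pos {f f' : ℝ → ℝ} {s : Set ℝ} {x₀ : ℝ}
    (hs : s ∈ 𝓝 x₀) (hf : ∀ x ∈ s, HasDerivAt f (f' x) x) (hc : ContinuousAt f' x₀)
    (hpos : 0 < f' x₀) : ∃ V ∈ 𝓝 x₀, V ⊆ s ∧ StrictMonoOn f V := by
  obtain ⟨r, hr, hball⟩ := Metric.mem_nhds_iff.1 (inter_mem hs (hc.eventually (lt_mem_nhds hpos)))
  refine ⟨ball x₀ r, ball_mem_nhds x₀ hr, fun x hx => (hball hx).1,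
    strictMonoOn_of_hasDerivWithinAt_pos (f' := f') (convex_ball x₀ r)
      (fun x hx => (hf x (hball hx).1).continuousAt.continuousWithinAt) ?_ ?_⟩
  · rw [isOpen_ball.interior_eq]
    exact fun x hx => (hf x (hball hx).1).hasDerivWithinAt
  · rw [isOpen_ball.interior_eq]
    exact fun x hx => (hball hx).2

theorem abs_inv_sub_inv_le {x y m : ℝ} (hm : 0 < m) (hx : m ≤ |x|) (hy : m ≤ |y|) :
    |x⁻¹ - y⁻¹| ≤ |x - y| / m ^ 2 := by
  have hx0 : x ≠ 0 := abs_pos.1 (hm.trans_le hx)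
  have hy0 : y ≠ 0 := abs_pos.1 (hm.trans_le hy)
  rw [inv_sub_inv hx0 hy0, abs_div, abs_mul, abs_sub_comm, sq]
  gcongr

theorem abs_inv_comp_sub_le {φ ψ : ℝ → ℝ} {s t : Set ℝ} {c α L m : ℝ} (hα : 0 ≤ α) (hc : 0 ≤ c)
    (hL : 0 ≤ L) (hm : 0 < m) (hψ : MapsTo ψ t s) (hφm : ∀ x ∈ s, m ≤ |φ x|)
    (hφ : ∀ x ∈ s, ∀ y ∈ s, |φ x - φ y| ≤ c * |x - y| ^ α)
    (hψL : ∀ y ∈ t, ∀ z ∈ t, |ψ y - ψ z| ≤ L * |y - z|) {y z : ℝ} (hy : y ∈ t) (hz : z ∈ t) :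
    |(φ (ψ y))⁻¹ - (φ (ψ z))⁻¹| ≤ c * L ^ α / m ^ 2 * |y - z| ^ α :=
  calc |(φ (ψ y))⁻¹ - (φ (ψ z))⁻¹|
      ≤ |φ (ψ y) - φ (ψ z)| / m ^ 2 := abs_inv_sub_inv_le hm (hφm _ (hψ hy)) (hφm _ (hψ hz))
    _ ≤ c * (L * |y - z|) ^ α / m ^ 2 := by
        gcongr
        exact (hφ _ (hψ hy) _ (hψ hz)).trans (by gcongr; exact hψL y hy z hz)
    _ = c * L ^ α / m ^ 2 * |y - z| ^ α := by rw [Real.mul_rpow hL (abs_nonneg _)]; ring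

section Linearization

variable {g g' : ℝ → ℝ} {a b α δ : ℝ} {U : Set ℝ}

theorem exists_linearization_on_ball (hα : 0 < α) (ha : a ≠ 0) (hb0 : 0 ≤ b) (hb1 : b < 1)
    (hδ : 0 < δ) (hg : HasHolderDerivOn α g g' (ball 0 δ)) (hg'b : ∀ x ∈ ball 0 δ, |g' x| ≤ b)
    (hg0 : g 0 = 0) (hg'0 : g' 0 = a) :
    ∃ h h', HasHolderDerivOn α h h' (ball 0 δ) ∧ h 0 = 0 ∧ h' 0 = 1 ∧
      ∀ x ∈ ball 0 δ, h (g x) = a * h x := by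
  obtain ⟨hd, c, hc, hhold⟩ := hg
  have h0δ : (0 : ℝ) ∈ ball 0 δ := mem_ball_self hδ
  have hlip : ∀ x ∈ ball 0 δ, ∀ y ∈ ball 0 δ, dist (g x) (g y) ≤ b * dist x y :=
    fun x hx y hy => (convex_ball 0 δ).norm_image_sub_le_of_norm_hasDerivWithin_le
      (fun z hz => (hd z hz).hasDerivWithinAt) hg'b hy hx
  have hmaps : MapsTo g (ball 0 δ) (ball 0 δ) :=
    mapsTo_ball_of_dist_le hb1.le fun x hx => by simpa [hg0] using hlip x hx 0 h0δ
  have hfix : ∀ k, g^[k] 0 = 0 := Function.iterate_fixed hg0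
  have hhold_a : ∀ x ∈ ball 0 δ, ∀ y ∈ ball 0 δ, |g' x / a - g' y / a| ≤ c / |a| * |x - y| ^ α :=
    fun x hx y hy => by
      rw [← sub_div, abs_div, div_mul_eq_mul_div]
      exact div_le_div_of_nonneg_right (hhold x hx y hy) (abs_nonneg a)
  have hu := abs_comp_iterate_sub_le hα.le hb0 (by positivity) hmaps hlip hhold_a
  have hK : ∀ x ∈ ball 0 δ, c / |a| * |x - 0| ^ α ≤ c / |a| * δ ^ α := fun x hx => by
    rw [mem_ball_zero_iff, Real.norm_eq_abs] at hx
    rw [sub_zero]; gcongr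
  obtain ⟨h', hq, C, hC, hh'⟩ := exists_tendstoUniformlyOn_prod_range_of_abs_sub_le
    (u := fun k x => g' (g^[k] x) / a) (D := fun x y => c / |a| * |x - y| ^ α) (by positivity)
    (Real.rpow_lt_one hb0 hb1 hα) h0δ (fun k => by simp [hfix, hg'0, ha])
    (fun k _ hx _ hy => hu k hx hy) hK
  have hF : ∀ n, ∀ x ∈ ball 0 δ,
      HasDerivAt (fun y => g^[n] y / a ^ n) (∏ k ∈ range n, g' (g^[k] x) / a) x := by
    intro n x hx
    rw [prod_div_distrib, prod_const, card_range]
    exact (hasDerivAt_iterate_of_mapsTo hmaps hd n hx).div_const _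
  obtain ⟨h, hlim, hh⟩ := exists_hasDerivAt_of_tendstoUniformlyOn_ball hq hF
    (by simpa [hfix] using cauchySeq_const (0 : ℝ))
  refine ⟨h, h', ⟨hh, C * (c / |a|), by positivity, fun x hx y hy => ?_⟩, ?_, ?_, fun x hx => ?_⟩
  · simpa [mul_assoc] using hh' x hx y hy
  · exact tendsto_nhds_unique (hlim 0 h0δ) (by simp [hfix])
  · exact tendsto_nhds_unique (hq.tendsto_at h0δ) (by simp [hfix, hg'0, ha])
  · have hshift : ∀ n, g^[n] (g x) / a ^ n = a * (g^[n + 1] x / a ^ (n + 1)) := fun n => by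
      rw [Function.iterate_succ_apply]; field_simp; ring
    refine tendsto_nhds_unique (hlim _ (hmaps hx)) ?_
    simpa [hshift] using ((hlim x hx).comp (tendsto_add_atTop_nat 1)).const_mul a

theorem exists_linearization_of_abs_lt_one (hα : 0 < α) (ha0 : a ≠ 0) (ha1 : |a| < 1)
    (hU : U ∈ 𝓝 0) (hg : HasHolderDerivOn α g g' U) (hg0 : g 0 = 0) (hg'0 : g' 0 = a) :
    ∃ V ∈ 𝓝 (0 : ℝ), ∃ h h', HasHolderDerivOn α h h' V ∧ StrictMonoOn h V ∧ h 0 = 0 ∧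
      h' 0 = 1 ∧ ∀ x ∈ V, h (g x) = a * h x := by
  have hnear : U ∩ {x | ‖g' x‖ < (1 + |a|) / 2} ∈ 𝓝 0 :=
    inter_mem hU ((hg.continuousAt_deriv hα hU).norm.eventually
      (gt_mem_nhds (by simp only [hg'0, Real.norm_eq_abs]; linarith)))
  obtain ⟨δ, hδ, hball⟩ := Metric.mem_nhds_iff.1 hnear
  obtain ⟨h, h', hh, h0, h'0, hconj⟩ := exists_linearization_on_ball hα ha0 (by positivity)
    (by linarith) hδ (hg.mono fun x hx => (hball hx).1) (fun x hx => (hball hx).2.le) hg0 hg'0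
  obtain ⟨V, hV, hVδ, hmono⟩ := exists_mem_nhds_strictMonoOn_of_deriv_pos (ball_mem_nhds 0 hδ)
    hh.1 (hh.continuousAt_deriv hα (ball_mem_nhds 0 hδ)) (h'0 ▸ one_pos)
  exact ⟨V, hV, h, h', hh.mono hVδ, hmono, h0, h'0, fun x hx => hconj x (hVδ hx)⟩

theorem exists_localInverse (hα : 0 < α) (ha : a ≠ 0) (hU : U ∈ 𝓝 0)
    (hg : HasHolderDerivOn α g g' U) (hg0 : g 0 = 0) (hg'0 : g' 0 = a) :
    ∃ W ∈ 𝓝 (0 : ℝ), ∃ f f', HasHolderDerivOn α f f' W ∧ f 0 = 0 ∧ f' 0 = a⁻¹ ∧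
      ∀ᶠ x in 𝓝 0, f (g x) = x := by
  have hcont := hg.continuousAt_deriv hα hU
  obtain ⟨hd, c, hc, hhold⟩ := hg
  have hstrict : HasStrictDerivAt g a 0 :=
    hg'0 ▸ hasStrictDerivAt_of_hasDerivAt_of_continuousAt (eventually_of_mem hU hd) hcont
  have hF := hstrict.hasStrictFDerivAt_equiv ha
  set e := hF.toOpenPartialHomeomorph g
  have h0src : (0 : ℝ) ∈ e.source := hF.mem_toOpenPartialHomeomorph_source
  have h0tgt : (0 : ℝ) ∈ e.target := by
    simpa [e, hg0] using hF.image_mem_toOpenPartialHomeomorph_target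
  have he0 : e.symm 0 = 0 := by simpa [e, hg0] using e.left_inv h0src
  have hO : U ∩ {x | |a| / 2 < ‖g' x‖} ∈ 𝓝 0 :=
    inter_mem hU (hcont.norm.eventually (lt_mem_nhds (by
      simp only [hg'0, Real.norm_eq_abs]; exact half_lt_self (abs_pos.2 ha))))
  obtain ⟨r, hr, hball⟩ := Metric.mem_nhds_iff.1 (inter_mem (e.open_target.mem_nhds h0tgt)
    ((e.continuousAt_symm h0tgt).preimage_mem_nhds (by rwa [he0])))
  have ha2 : 0 < |a| / 2 := by positivity
  have hfd : ∀ y ∈ ball (0 : ℝ) r, HasDerivAt e.symm (g' (e.symm y))⁻¹ y := fun y hy =>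
    e.hasDerivAt_symm (hball hy).1 (norm_pos_iff.1 (ha2.trans (hball hy).2.2))
      (hd _ (hball hy).2.1)
  have hlip : ∀ y ∈ ball (0 : ℝ) r, ∀ z ∈ ball (0 : ℝ) r,
      |e.symm y - e.symm z| ≤ (|a| / 2)⁻¹ * |y - z| := fun y hy z hz =>
    (convex_ball 0 r).norm_image_sub_le_of_norm_hasDerivWithin_le
      (fun w hw => (hfd w hw).hasDerivWithinAt)
      (fun w hw => by rw [norm_inv]; exact inv_anti₀ ha2 (hball hw).2.2.le) hz hy
  have hholder : ∀ y ∈ ball (0 : ℝ) r, ∀ z ∈ ball (0 : ℝ) r,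
      |(g' (e.symm y))⁻¹ - (g' (e.symm z))⁻¹| ≤ c * (|a| / 2)⁻¹ ^ α / (|a| / 2) ^ 2 * |y - z| ^ α :=
    fun y hy z hz => abs_inv_comp_sub_le (s := U ∩ {x | |a| / 2 < ‖g' x‖}) hα.le hc
      (by positivity) ha2 (fun y hy => (hball hy).2) (fun x hx => hx.2.le)
      (fun x hx y hy => hhold x hx.1 y hy.1) hlip hy hz
  exact ⟨ball 0 r, ball_mem_nhds 0 hr, e.symm, _, ⟨hfd, _, by positivity, hholder⟩, he0,
    by simp [he0, hg'0], e.eventually_left_inverse h0src⟩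

theorem exists_linearization_of_one_lt_abs (hα : 0 < α) (ha1 : 1 < |a|) (hU : U ∈ 𝓝 0)
    (hg : HasHolderDerivOn α g g' U) (hg0 : g 0 = 0) (hg'0 : g' 0 = a) :
    ∃ V ∈ 𝓝 (0 : ℝ), ∃ h h', HasHolderDerivOn α h h' V ∧ StrictMonoOn h V ∧ h 0 = 0 ∧
      h' 0 = 1 ∧ ∀ x ∈ V, h (g x) = a * h x := by
  have ha0 : a ≠ 0 := by rintro rfl; simp at ha1; linarith
  obtain ⟨W, hW, f, f', hf, hf0, hf'0, hfg⟩ := exists_localInverse hα ha0 hU hg hg0 hg'0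
  obtain ⟨V, hV, h, h', hh, hmono, h0, h'0, hconj⟩ := exists_linearization_of_abs_lt_one hα
    (inv_ne_zero ha0) (by rw [abs_inv]; exact inv_lt_one_of_one_lt₀ ha1) hW hf hf0 hf'0
  have hgV : ∀ᶠ x in 𝓝 (0 : ℝ), g x ∈ V :=
    (hg.1 0 (mem_of_mem_nhds hU)).continuousAt.preimage_mem_nhds (by rwa [hg0])
  refine ⟨V ∩ {x | g x ∈ V ∧ f (g x) = x}, inter_mem hV (hgV.and hfg), h, h',
    hh.mono inter_subset_left, hmono.mono inter_subset_left, h0, h'0, ?_⟩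
  rintro x ⟨-, hgx, hfgx⟩
  rw [← hfgx, hconj (g x) hgx, hfgx, mul_inv_cancel_left₀ ha0]

theorem exists_linearization (hα : 0 < α) (ha0 : a ≠ 0) (ha1 : |a| ≠ 1) (hU : U ∈ 𝓝 0)
    (hg : HasHolderDerivOn α g g' U) (hg0 : g 0 = 0) (hg'0 : g' 0 = a) :
    ∃ V ∈ 𝓝 (0 : ℝ), ∃ h h', HasHolderDerivOn α h h' V ∧ StrictMonoOn h V ∧ h 0 = 0 ∧
      h' 0 = 1 ∧ ∀ x ∈ V, h (g x) = a * h x := by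
  rcases ha1.lt_or_gt with ha1 | ha1
  · exact exists_linearization_of_abs_lt_one hα ha0 ha1 hU hg hg0 hg'0
  · exact exists_linearization_of_one_lt_abs hα ha1 hU hg hg0 hg'0

end Linearization

theorem stmt_2_general (α a : ℝ) (hα : α ∈ Ioo (0 : ℝ) 1) (ha : 0 < a) (hane : a ≠ 1)
    (U : Set ℝ) (hU : U ∈ nhds (0 : ℝ))
    (g g' : ℝ → ℝ)
    (hderiv : ∀ x ∈ U, HasDerivAt g (g' x) x)
    (hhold : ∃ c : ℝ, 0 ≤ c ∧ ∀ x ∈ U, ∀ y ∈ U, |g' x - g' y| ≤ c * |x - y| ^ α)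
    (hg0 : g 0 = 0) (hg'0 : g' 0 = a) :
    ∃ (V : Set ℝ) (h h' : ℝ → ℝ), V ∈ nhds (0 : ℝ) ∧
      (∀ x ∈ V, HasDerivAt h (h' x) x) ∧
      StrictMonoOn h V ∧
      (∃ c : ℝ, 0 ≤ c ∧ ∀ x ∈ V, ∀ y ∈ V, |h' x - h' y| ≤ c * |x - y| ^ α) ∧
      h 0 = 0 ∧ h' 0 = 1 ∧
      (∀ x ∈ V, h (g x) = a * h x) := by
  obtain ⟨V, hV, h, h', ⟨hh, hh'⟩, hmono, h0, h'0, hconj⟩ :=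
    exists_linearization hα.1 ha.ne' (by rwa [abs_of_pos ha]) hU ⟨hderiv, hhold⟩ hg0 hg'0
  exact ⟨V, h, h', hV, hh, hmono, hh', h0, h'0, hconj⟩

/-- The `C^{1+α}` Sternberg linearization theorem (existence part): if `g` is a real-valued
orientation-preserving diffeomorphism of a neighborhood of `0` whose derivative `g'` is
`α`-Hölder continuous, with `g 0 = 0` and `g' 0 = a` where `a > 0`, `a ≠ 1`, then there is
an orientation-preserving `C^{1+α}`-diffeomorphism `h` of some neighborhood of `0` with
`h 0 = 0`, `h' 0 = 1` and `h (g x) = a * h x` on that neighborhood. -/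
theorem stmt_2 (α a : ℝ) (hα : α ∈ Ioo (0 : ℝ) 1) (ha : 0 < a) (hane : a ≠ 1)
    (U : Set ℝ) (hU : U ∈ nhds (0 : ℝ))
    (g g' : ℝ → ℝ)
    (hderiv : ∀ x ∈ U, HasDerivAt g (g' x) x)
    (hmono : StrictMonoOn g U)
    (hhold : ∃ c : ℝ, 0 ≤ c ∧ ∀ x ∈ U, ∀ y ∈ U, |g' x - g' y| ≤ c * |x - y| ^ α)
    (hg0 : g 0 = 0) (hg'0 : g' 0 = a) :
    ∃ (V : Set ℝ) (h h' : ℝ → ℝ), V ∈ nhds (0 : ℝ) ∧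
      (∀ x ∈ V, HasDerivAt h (h' x) x) ∧
      StrictMonoOn h V ∧
      (∃ c : ℝ, 0 ≤ c ∧ ∀ x ∈ V, ∀ y ∈ V, |h' x - h' y| ≤ c * |x - y| ^ α) ∧
      h 0 = 0 ∧ h' 0 = 1 ∧
      (∀ x ∈ V, h (g x) = a * h x) :=
  stmt_2_general α a hα ha hane U hU g g' hderiv hhold hg0 hg'0
end

section
/- Let \(g\) be a real-valued orientation-preserving \(C^1\)-diffeomorphism on a neighborhood of \(0\) with \(g(0)=0\) and \(g'(0)=a\), \(0<a<1\). If \(h\) and \(h_1\) are both orientation-preserving \(C^1\)-diffeomorphisms defined on neighborhoods of \(0\) with \(h(0)=h_1(0)=0\), \(h'(0)=h_1'(0)=1\), and both satisfy the linearization equation \(h \circ g = a\,h\) and \(h_1 \circ g = a\,h_1\) near \(0\), then \(h = h_1\) on some neighborhood of \(0\). -/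
/-!
Differentiability at `0` with `|g'(0)| < 1` makes `0` an attracting fixed point of `g`, so the
orbit `gⁿ x` of a point near `0` tends to `0` without leaving the domains of `h` and `h₁`. Along
the orbit both conjugacies scale by `aⁿ`, while `h - h₁ = o(h₁)` at `0` because `h'(0) = h₁'(0)`.
Dividing by `aⁿ`, the constant `h x - h₁ x` is `o(h₁ x)` along the orbit, hence zero.
-/

open Set Filter Topology Asymptotics

section

variable {𝕜 : Type*} [NontriviallyNormedField 𝕜]

theorem HasDerivAt.eventually_norm_le_mul_norm {g : 𝕜 → 𝕜} {a : 𝕜} (hg : HasDerivAt g a 0)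
    (hg0 : g 0 = 0) {c : ℝ} (hc : ‖a‖ < c) : ∀ᶠ x in 𝓝 0, ‖g x‖ ≤ c * ‖x‖ := by
  have hlo := hg.isLittleO
  simp only [hg0, sub_zero, smul_eq_mul] at hlo
  filter_upwards [hlo.def (sub_pos.2 hc)] with x hx
  calc ‖g x‖ ≤ ‖g x - x * a‖ + ‖x * a‖ := norm_le_norm_sub_add _ _
    _ ≤ (c - ‖a‖) * ‖x‖ + ‖x‖ * ‖a‖ := by rw [norm_mul]; gcongr
    _ = c * ‖x‖ := by ring

theorem HasDerivAt.isLittleO_sub_of_hasDerivAt {F : Type*} [NormedAddCommGroup F]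
    [NormedSpace 𝕜 F] {f f₁ : 𝕜 → F} {f' : F} {x : 𝕜} (hf : HasDerivAt f f' x)
    (hf₁ : HasDerivAt f₁ f' x) (hx : f x = f₁ x) (hf' : f' ≠ 0) :
    (fun y => f y - f₁ y) =o[𝓝 x] fun y => f₁ y - f₁ x := by
  have hlo := (hf.sub hf₁).isLittleO
  simp only [sub_self, smul_zero, sub_zero, Pi.sub_apply, hx] at hlo
  have hxx : Tendsto (fun y => (y, x)) (𝓝 x) (𝓝 x ×ˢ pure x) :=
    tendsto_id.prodMk (tendsto_pure.2 (Eventually.of_forall fun _ => rfl))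
  exact hlo.trans_isBigO ((hf₁.isTheta_sub hf').isBigO_symm.comp_tendsto hxx)

theorem Set.MapsTo.apply_iterate_eq_pow_smul {α β M : Type*} [Monoid M] [MulAction M β]
    {g : α → α} {N : Set α} {f : α → β} {a : M} (hg : MapsTo g N N)
    (hf : ∀ x ∈ N, f (g x) = a • f x) {x : α} (hx : x ∈ N) (n : ℕ) :
    f (g^[n] x) = a ^ n • f x := by
  induction n with
  | zero => simp
  | succ n ih =>
    rw [Function.iterate_succ_apply', hf _ (hg.iterate n hx), ih, pow_succ', mul_smul]

theorem Set.MapsTo.norm_iterate_le {E : Type*} [SeminormedAddCommGroup E] {g : E → E}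
    {N : Set E} (hg : MapsTo g N N) {c : ℝ} (hc : 0 ≤ c) (hgc : ∀ x ∈ N, ‖g x‖ ≤ c * ‖x‖)
    {x : E} (hx : x ∈ N) (n : ℕ) : ‖g^[n] x‖ ≤ c ^ n * ‖x‖ := by
  induction n with
  | zero => simp
  | succ n ih =>
    rw [Function.iterate_succ_apply', pow_succ', mul_assoc]
    exact (hgc _ (hg.iterate n hx)).trans (mul_le_mul_of_nonneg_left ih hc)

theorem HasDerivAt.exists_mapsTo_tendsto_iterate {g : 𝕜 → 𝕜} {a : 𝕜} (hg : HasDerivAt g a 0)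
    (hg0 : g 0 = 0) (ha : ‖a‖ < 1) {U : Set 𝕜} (hU : U ∈ 𝓝 0) :
    ∃ N ∈ 𝓝 (0 : 𝕜), N ⊆ U ∧ MapsTo g N N ∧
      ∀ x ∈ N, Tendsto (fun n => g^[n] x) atTop (𝓝 0) := by
  obtain ⟨c, hac, hc1⟩ := exists_between ha
  have hc : 0 ≤ c := (norm_nonneg a).trans hac.le
  obtain ⟨δ, hδ, hδU⟩ := Metric.nhds_basis_closedBall.mem_iff.1
    (inter_mem hU (hg.eventually_norm_le_mul_norm hg0 hac))
  have hgc : ∀ x ∈ Metric.closedBall (0 : 𝕜) δ, ‖g x‖ ≤ c * ‖x‖ := fun x hx => (hδU hx).2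
  have hmaps : MapsTo g (Metric.closedBall 0 δ) (Metric.closedBall 0 δ) := fun x hx => by
    rw [mem_closedBall_zero_iff] at hx ⊢
    exact (hgc x (mem_closedBall_zero_iff.2 hx)).trans ((mul_le_of_le_one_left (norm_nonneg x) hc1.le).trans hx)
  refine ⟨_, Metric.closedBall_mem_nhds 0 hδ, fun x hx => (hδU hx).1, hmaps, fun x hx => ?_⟩
  refine squeeze_zero_norm (hmaps.norm_iterate_le hc hgc hx) ?_
  simpa using (tendsto_pow_atTop_nhds_zero_of_lt_one hc hc1).mul_const ‖x‖

end

theorem eq_of_isLittleO_of_apply_eq_pow_smul {X 𝕜 F : Type*} [NormedField 𝕜]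
    [NormedAddCommGroup F] [NormedSpace 𝕜 F] {l : Filter X} {f f₁ : X → F}
    (hf : (fun y => f y - f₁ y) =o[l] f₁) {u : ℕ → X} (hu : Tendsto u atTop l) {a : 𝕜}
    (ha : a ≠ 0) (hfu : ∀ n, f (u n) = a ^ n • f (u 0)) (hf₁u : ∀ n, f₁ (u n) = a ^ n • f₁ (u 0)) :
    f (u 0) = f₁ (u 0) := by
  have hscaled := (isBigO_refl (fun n => (a ^ n)⁻¹) atTop).smul_isLittleO (hf.comp_tendsto hu)
  have hcancel : ∀ n (y : F), (a ^ n)⁻¹ • a ^ n • y = y := fun n y => by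
    rw [smul_smul, inv_mul_cancel₀ (pow_ne_zero n ha), one_smul]
  have hconst : (fun _ : ℕ => f (u 0) - f₁ (u 0)) =o[atTop] fun _ => f₁ (u 0) :=
    hscaled.congr (fun n => by simp only [Function.comp_apply, hfu n, hf₁u n, ← smul_sub, hcancel])
      (fun n => by simp only [Function.comp_apply, hf₁u n, hcancel])
  exact sub_eq_zero.1 (isLittleO_const_const_iff.1 hconst)

theorem stmt_3_general (a : ℝ) (ha : a ∈ Ioo (0 : ℝ) 1)
    (W : Set ℝ) (hW : W ∈ nhds (0 : ℝ))
    (g g' : ℝ → ℝ)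
    (hgderiv : ∀ x ∈ W, HasDerivAt g (g' x) x)
    (hg0 : g 0 = 0) (hg'0 : g' 0 = a)
    (V : Set ℝ) (hV : V ∈ nhds (0 : ℝ))
    (h h' : ℝ → ℝ)
    (hhderiv : ∀ x ∈ V, HasDerivAt h (h' x) x)
    (hh0 : h 0 = 0) (hh'0 : h' 0 = 1)
    (hhlin : ∀ x ∈ V, h (g x) = a * h x)
    (V₁ : Set ℝ) (hV₁ : V₁ ∈ nhds (0 : ℝ))
    (h₁ h₁' : ℝ → ℝ)
    (hh₁deriv : ∀ x ∈ V₁, HasDerivAt h₁ (h₁' x) x)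
    (hh₁0 : h₁ 0 = 0) (hh₁'0 : h₁' 0 = 1)
    (hh₁lin : ∀ x ∈ V₁, h₁ (g x) = a * h₁ x) :
    ∃ N ∈ nhds (0 : ℝ), Set.EqOn h h₁ N := by
  obtain ⟨ha0, ha1⟩ := ha
  have hg : HasDerivAt g a 0 := hg'0 ▸ hgderiv 0 (mem_of_mem_nhds hW)
  obtain ⟨N, hN, hNV, hgN, horbit⟩ := hg.exists_mapsTo_tendsto_iterate hg0
    (by rwa [Real.norm_of_nonneg ha0.le]) (inter_mem hV hV₁)
  have hlo : (fun y => h y - h₁ y) =o[𝓝 0] h₁ := by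
    have hh : HasDerivAt h 1 0 := hh'0 ▸ hhderiv 0 (mem_of_mem_nhds hV)
    have hh₁ : HasDerivAt h₁ 1 0 := hh₁'0 ▸ hh₁deriv 0 (mem_of_mem_nhds hV₁)
    simpa [hh₁0] using hh.isLittleO_sub_of_hasDerivAt hh₁ (hh0.trans hh₁0.symm) one_ne_zero
  refine ⟨N, hN, fun x hx => ?_⟩
  exact eq_of_isLittleO_of_apply_eq_pow_smul hlo (horbit x hx) ha0.ne'
    (hgN.apply_iterate_eq_pow_smul (fun y hy => hhlin y (hNV hy).1) hx)
    (hgN.apply_iterate_eq_pow_smul (fun y hy => hh₁lin y (hNV hy).2) hx)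

/-- Uniqueness part of the Sternberg linearization theorem: if `g` is an
orientation-preserving `C¹`-diffeomorphism of a neighborhood of `0` with `g 0 = 0`,
`g' 0 = a`, `0 < a < 1`, and `h`, `h₁` are two orientation-preserving
`C¹`-diffeomorphisms of neighborhoods of `0` with `h 0 = h₁ 0 = 0`,
`h' 0 = h₁' 0 = 1`, both conjugating `g` to multiplication by `a`
(`h ∘ g = a·h`, `h₁ ∘ g = a·h₁` near `0`), then `h = h₁` on some neighborhood of `0`. -/
theorem stmt_3 (a : ℝ) (ha : a ∈ Ioo (0 : ℝ) 1)
    (W : Set ℝ) (hW : W ∈ nhds (0 : ℝ))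
    (g g' : ℝ → ℝ)
    (hgderiv : ∀ x ∈ W, HasDerivAt g (g' x) x)
    (hgcont : ContinuousOn g' W)
    (hgmono : StrictMonoOn g W)
    (hg0 : g 0 = 0) (hg'0 : g' 0 = a)
    (V : Set ℝ) (hV : V ∈ nhds (0 : ℝ))
    (h h' : ℝ → ℝ)
    (hhderiv : ∀ x ∈ V, HasDerivAt h (h' x) x)
    (hhcont : ContinuousOn h' V)
    (hhmono : StrictMonoOn h V)
    (hh0 : h 0 = 0) (hh'0 : h' 0 = 1)
    (hhlin : ∀ x ∈ V, h (g x) = a * h x)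
    (V₁ : Set ℝ) (hV₁ : V₁ ∈ nhds (0 : ℝ))
    (h₁ h₁' : ℝ → ℝ)
    (hh₁deriv : ∀ x ∈ V₁, HasDerivAt h₁ (h₁' x) x)
    (hh₁cont : ContinuousOn h₁' V₁)
    (hh₁mono : StrictMonoOn h₁ V₁)
    (hh₁0 : h₁ 0 = 0) (hh₁'0 : h₁' 0 = 1)
    (hh₁lin : ∀ x ∈ V₁, h₁ (g x) = a * h₁ x) :
    ∃ N ∈ nhds (0 : ℝ), Set.EqOn h h₁ N :=
  stmt_3_general a ha W hW g g' hgderiv hg0 hg'0 V hV h h' hhderiv hh0 hh'0 hhlin V₁ hV₁ h₁ h₁'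
    hh₁deriv hh₁0 hh₁'0 hh₁lin
end
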